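/- Every satisfiable normal-form FO²MOD[≤,succ] formula φ satisfiable over finite words has a model of size at most f(φ), where f(φ) is the number of (l₁,…,l_m)-full types over the signature of φ. -/

import Mathlib

/-! FO²MOD[≤,succ] over finite words: small model property. -/

/-- The five order formulas over words. -/
inductive WOrd where
  | eq | succ | pred | farR | farL
deriving DecidableEq

instance : Fintype WOrd :=
  ⟨{.eq, .succ, .pred, .farR, .farL}, by intro x; cases x <;> simp⟩

/-- The unique order formula holding between two positions of a word. -/
def ordOf {N : ℕ} (i j : Fin N) : WOrd :=
  if i = j then .eq
  else if (j : ℕ) = (i : ℕ) + 1 then .succ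
  else if (i : ℕ) = (j : ℕ) + 1 then .pred
  else if i < j then .farR
  else .farL

/-- A normal-form FO²MOD formula
`∀x∀y χ ∧ ⋀ᵢ ∀x∃y χᵢ ∧ ⋀ⱼ ∀x ∃^{⋈ⱼ kⱼ,lⱼ} y ψⱼ` over unary signature `τ`.
Quantifier-free two-variable formulas are represented by their truth value as a
function of the 1-type of `x`, the 1-type of `y` and the order formula relating
`x` and `y`. `isLE j` tells whether `⋈ⱼ` is `≤` (otherwise `≥`). -/
structure NF (τ : Type) where
  n : ℕ
  m : ℕ
  npos : 0 < n
  mpos : 0 < m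
  chi : (τ → Bool) → (τ → Bool) → WOrd → Bool
  chis : Fin n → (τ → Bool) → (τ → Bool) → WOrd → Bool
  psi : Fin m → (τ → Bool) → (τ → Bool) → WOrd → Bool
  isLE : Fin m → Bool
  k : Fin m → ℕ
  l : Fin m → ℕ
  lpos : ∀ j, 0 < l j
  klt : ∀ j, k j < l j

/-- The comparison `a ⋈ⱼ kⱼ` of the `j`-th modulo conjunct. -/
def NF.bow {τ : Type} (φ : NF τ) (j : Fin φ.m) (a : ℕ) : Prop :=
  if φ.isLE j then a ≤ φ.k j else φ.k j ≤ a

/-- Satisfaction of a normal-form formula in the finite word of length `N`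
whose position `i` carries exactly the unary predicates `lab i`. -/
def WSat {τ : Type} (φ : NF τ) (N : ℕ) (lab : Fin N → τ → Bool) : Prop :=
  (∀ i j : Fin N, φ.chi (lab i) (lab j) (ordOf i j) = true) ∧
  (∀ c : Fin φ.n, ∀ i : Fin N, ∃ j : Fin N, φ.chis c (lab i) (lab j) (ordOf i j) = true) ∧
  (∀ c : Fin φ.m, ∀ i : Fin N,
    φ.bow c ((Finset.univ.filter
      fun j : Fin N => φ.psi c (lab i) (lab j) (ordOf i j) = true).card % φ.l c))

/-- `f(φ)`: the number of `(l₁,…,l_m)`-full types over the signature of `φ`. -/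
def fsize {τ : Type} [Fintype τ] (φ : NF τ) : ℕ :=
  (2 * ∏ j, φ.l j) ^ (5 * 2 ^ Fintype.card τ)

/-!
If a word longer than `f(φ)` satisfies `φ`, two positions `P < Q` have the same full type.
Cut out the factor `[P, Q)`. Seen from any remaining position, each count of letters in one
of the five order relations either is unchanged or changes by the number of occurrences inside
the cut factor, and these numbers are the differences between the side counts of `P` and `Q`.
The relation "both zero or both positive, and congruent modulo every `lⱼ`" is compatible with
addition, so every position of the shorter word has the full type of a position of the original
word. Satisfaction of a normal-form formula at a position depends only on its full type (which
also records its letter), so the shorter word is again a model.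
-/

open Finset

def CountEquiv {ι : Type*} (l : ι → ℕ) (a b : ℕ) : Prop :=
  (0 < a ↔ 0 < b) ∧ ∀ c, a ≡ b [MOD l c]

namespace CountEquiv

variable {ι : Type*} {l : ι → ℕ} {a b c a' b' : ℕ}

theorem refl (l : ι → ℕ) (a : ℕ) : CountEquiv l a a :=
  ⟨Iff.rfl, fun _ => rfl⟩

theorem of_eq (h : a = b) : CountEquiv l a b := h ▸ refl l a

theorem symm (h : CountEquiv l a b) : CountEquiv l b a :=
  ⟨h.1.symm, fun c => (h.2 c).symm⟩

theorem trans (h : CountEquiv l a b) (h' : CountEquiv l b c) : CountEquiv l a c :=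
  ⟨h.1.trans h'.1, fun i => (h.2 i).trans (h'.2 i)⟩

theorem add (h : CountEquiv l a a') (h' : CountEquiv l b b') :
    CountEquiv l (a + b) (a' + b') :=
  ⟨by have := h.1; have := h'.1; omega, fun c => (h.2 c).add (h'.2 c)⟩

theorem add_left (c : ℕ) (h : CountEquiv l a b) : CountEquiv l (c + a) (c + b) :=
  (refl l c).add h

theorem add_right (c : ℕ) (h : CountEquiv l a b) : CountEquiv l (a + c) (b + c) :=
  h.add (refl l c)

end CountEquiv

def ordNat (a b : ℕ) : WOrd :=
  if a = b then .eq
  else if b = a + 1 then .succ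
  else if a = b + 1 then .pred
  else if a < b then .farR
  else .farL

theorem ordOf_eq_ordNat {N : ℕ} (i j : Fin N) : ordOf i j = ordNat i j := by
  simp only [ordOf, ordNat, Fin.ext_iff, Fin.lt_def]

-- For `i = 0` the truncated `i - 1` yields the empty intervals `[0, 0)`.
def WOrd.window : WOrd → ℕ → ℕ → ℕ × ℕ
  | .eq, i, _ => (i, i + 1)
  | .succ, i, M => (i + 1, min (i + 2) M)
  | .pred, i, _ => (i - 1, i)
  | .farR, i, M => (i + 2, M)
  | .farL, i, _ => (0, i - 1)

section Counting

variable {α : Type*} [DecidableEq α]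

def relCount (Λ : ℕ → α) (M i : ℕ) (w : WOrd) (β : α) : ℕ :=
  #{j ∈ range M | ordNat i j = w ∧ Λ j = β}

def segCount (Λ : ℕ → α) (β : α) (a b : ℕ) : ℕ :=
  #{j ∈ Ico a b | Λ j = β}

variable (Λ : ℕ → α) (β : α)

theorem relCount_pos_iff {M i : ℕ} {w : WOrd} :
    0 < relCount Λ M i w β ↔ ∃ j < M, ordNat i j = w ∧ Λ j = β := by
  simp [relCount, card_pos, filter_nonempty_iff]

theorem relCount_eq_segCount {M i : ℕ} (hi : i < M) (w : WOrd) :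
    relCount Λ M i w β = segCount Λ β (w.window i M).1 (w.window i M).2 := by
  unfold relCount segCount
  congr 1
  ext j
  simp only [mem_filter, mem_range, mem_Ico]
  unfold ordNat
  cases w <;> simp only [WOrd.window] <;> split_ifs <;> simp <;> omega

theorem segCount_add {a b c : ℕ} (hab : a ≤ b) (hbc : b ≤ c) :
    segCount Λ β a b + segCount Λ β b c = segCount Λ β a c := by
  rw [segCount, segCount, segCount, ← card_union_of_disjoint
    (disjoint_filter_filter (Ico_disjoint_Ico_consecutive a b c)), ← filter_union,
    Ico_union_Ico_eq_Ico hab hbc]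

theorem segCount_shift {Λ' : ℕ → α} {a b s : ℕ}
    (h : ∀ j, a ≤ j → j < b → Λ' j = Λ (j + s)) :
    segCount Λ' β a b = segCount Λ β (a + s) (b + s) := by
  rw [segCount, segCount, ← map_add_right_Ico, filter_map, card_map]
  congr 1
  refine filter_congr fun j hj => ?_
  rw [mem_Ico] at hj
  simp [h j hj.1 hj.2]

theorem segCount_congr {Λ' : ℕ → α} {a b : ℕ}
    (h : ∀ j, a ≤ j → j < b → Λ' j = Λ j) :
    segCount Λ' β a b = segCount Λ β a b :=
  segCount_shift Λ β (s := 0) h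

theorem relCount_succ_add_farR {M i : ℕ} (hi : i < M) :
    relCount Λ M i .succ β + relCount Λ M i .farR β = segCount Λ β (i + 1) M := by
  simp only [relCount_eq_segCount Λ β hi, WOrd.window]
  rcases Nat.lt_or_ge (i + 1) M with h | h
  · rw [min_eq_left (by omega), segCount_add Λ β (by omega) (by omega)]
  · simp [segCount, Ico_eq_empty_of_le, show M = i + 1 by omega]

theorem relCount_farL_add_pred {M i : ℕ} (hi : i < M) :
    relCount Λ M i .farL β + relCount Λ M i .pred β = segCount Λ β 0 i := by
  simp only [relCount_eq_segCount Λ β hi, WOrd.window]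
  exact segCount_add Λ β (Nat.zero_le _) (Nat.sub_le i 1)

theorem relCount_self_pos_iff {M i : ℕ} (hi : i < M) :
    0 < relCount Λ M i .eq β ↔ Λ i = β := by
  rw [relCount_eq_segCount Λ β hi, segCount, card_pos]
  simp only [WOrd.window, Nat.Ico_succ_singleton, filter_singleton]
  split_ifs <;> simp_all

theorem relCount_eq_of_window {Λ' : ℕ → α} {M M' i i' s : ℕ} {w : WOrd}
    (hi : i < M) (hi' : i' < M')
    (hwin : w.window i M = ((w.window i' M').1 + s, (w.window i' M').2 + s))
    (h : ∀ j, (w.window i' M').1 ≤ j → j < (w.window i' M').2 → Λ' j = Λ (j + s)) :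
    relCount Λ' M' i' w β = relCount Λ M i w β := by
  rw [relCount_eq_segCount Λ' β hi', relCount_eq_segCount Λ β hi, hwin]
  exact segCount_shift Λ β h

end Counting

section Deletion

variable {α ι : Type*} [DecidableEq α]

/-- The word `Λ` with the positions `P, …, P + s - 1` removed. -/
def deleteIco (Λ : ℕ → α) (P s : ℕ) : ℕ → α :=
  fun a => if a < P then Λ a else Λ (a + s)

omit [DecidableEq α] in
theorem deleteIco_of_ge {Λ : ℕ → α} {P s a : ℕ} (ha : P ≤ a) :
    deleteIco Λ P s a = Λ (a + s) :=
  if_neg (not_lt.mpr ha)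

variable {l : ι → ℕ} {Λ : ℕ → α} {P s M : ℕ} (hM : P + s < M)
  (hPs : ∀ w β, CountEquiv l (relCount Λ M P w β) (relCount Λ M (P + s) w β))
include hM hPs

theorem deleteIco_of_le {a : ℕ} (ha : a ≤ P) : deleteIco Λ P s a = Λ a := by
  rcases ha.lt_or_eq with ha | rfl
  · exact if_pos ha
  · rw [deleteIco, if_neg (lt_irrefl a)]
    exact (relCount_self_pos_iff Λ _ hM).mp
      ((hPs .eq (Λ a)).1.mp ((relCount_self_pos_iff Λ _ (i := a) (by omega)).mpr rfl))

theorem countEquiv_segCount_after (β : α) :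
    CountEquiv l (segCount Λ β (P + 1) M) (segCount Λ β (P + s + 1) M) := by
  rw [← relCount_succ_add_farR Λ β (M := M) (i := P) (by omega),
    ← relCount_succ_add_farR Λ β hM]
  exact (hPs _ β).add (hPs _ β)

theorem countEquiv_segCount_before (β : α) :
    CountEquiv l (segCount Λ β 0 P) (segCount Λ β 0 (P + s)) := by
  rw [← relCount_farL_add_pred Λ β (M := M) (i := P) (by omega),
    ← relCount_farL_add_pred Λ β hM]
  exact (hPs _ β).add (hPs _ β)

theorem countEquiv_relCount_deleteIco_of_lt {x : ℕ} (hx : x < P) (w : WOrd) (β : α) :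
    CountEquiv l (relCount (deleteIco Λ P s) (M - s) x w β) (relCount Λ M x w β) := by
  have hxM : x < M - s := by omega
  cases w
  case farR =>
    rw [relCount_eq_segCount _ β hxM, relCount_eq_segCount _ β (by omega : x < M)]
    simp only [WOrd.window]
    rw [← segCount_add _ β (by omega : x + 2 ≤ P + 1) (by omega : P + 1 ≤ M - s),
      ← segCount_add _ β (by omega : x + 2 ≤ P + 1) (by omega : P + 1 ≤ M),
      segCount_congr Λ β fun j _ hj => deleteIco_of_le hM hPs (by omega : j ≤ P),
      segCount_shift Λ β fun j hj _ => deleteIco_of_ge (by omega : P ≤ j),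
      Nat.sub_add_cancel (by omega : s ≤ M), add_right_comm]
    exact (countEquiv_segCount_after hM hPs β).symm.add_left _
  all_goals
    refine .of_eq (relCount_eq_of_window Λ β (s := 0) (M := M) (i := x) (by omega) hxM
      (by ext <;> simp only [WOrd.window] <;> omega) fun j _ hj => ?_)
    simp only [WOrd.window] at hj
    exact deleteIco_of_le hM hPs (by omega)

theorem countEquiv_relCount_deleteIco_of_ge {x : ℕ} (hPx : P ≤ x) (hx : x < M - s)
    (w : WOrd) (β : α) :
    CountEquiv l (relCount (deleteIco Λ P s) (M - s) x w β) (relCount Λ M (x + s) w β) := by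
  have shift : ∀ w : WOrd, P ≤ (w.window x (M - s)).1 →
      w.window (x + s) M = ((w.window x (M - s)).1 + s, (w.window x (M - s)).2 + s) →
      relCount (deleteIco Λ P s) (M - s) x w β = relCount Λ M (x + s) w β :=
    fun w hP hwin => relCount_eq_of_window Λ β (by omega) hx hwin
      fun j hj _ => deleteIco_of_ge (hP.trans hj)
  rcases hPx.lt_or_eq with hPx | rfl
  · cases w
    case farL =>
      rw [relCount_eq_segCount _ β hx, relCount_eq_segCount _ β (by omega : x + s < M)]
      simp only [WOrd.window]
      rw [← segCount_add _ β (Nat.zero_le P) (by omega : P ≤ x - 1),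
        ← segCount_add _ β (Nat.zero_le (P + s)) (by omega : P + s ≤ x + s - 1),
        segCount_congr Λ β fun j _ hj => deleteIco_of_le hM hPs (by omega : j ≤ P),
        segCount_shift Λ β fun j hj _ => deleteIco_of_ge (by omega : P ≤ j),
        show x - 1 + s = x + s - 1 by omega]
      exact (countEquiv_segCount_before hM hPs β).add_right _
    all_goals exact .of_eq (shift _ (by simp only [WOrd.window]; omega)
      (by ext <;> simp only [WOrd.window] <;> omega))
  · -- At `P`, the counts to the left are those of `P` in `Λ`, the others those of `P + s`.
    cases w
    case pred | farL =>
      refine .trans (.of_eq (relCount_eq_of_window Λ β (s := 0) (M := M) (i := P) (by omega) hx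
        (by ext <;> simp only [WOrd.window] <;> omega) fun j _ hj => ?_)) (hPs _ β)
      simp only [WOrd.window] at hj
      exact deleteIco_of_le hM hPs (by omega)
    all_goals exact .of_eq (shift _ (by simp only [WOrd.window]; omega)
      (by ext <;> simp only [WOrd.window] <;> omega))

theorem exists_relCount_countEquiv_deleteIco {x : ℕ} (hx : x < M - s) :
    ∃ y < M, ∀ w β,
      CountEquiv l (relCount Λ M y w β) (relCount (deleteIco Λ P s) (M - s) x w β) := by
  rcases lt_or_ge x P with h | h
  · exact ⟨x, by omega, fun w β => (countEquiv_relCount_deleteIco_of_lt hM hPs h w β).symm⟩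
  · exact ⟨x + s, by omega,
      fun w β => (countEquiv_relCount_deleteIco_of_ge hM hPs h hx w β).symm⟩

end Deletion

section Positions

variable {α : Type*} [DecidableEq α] (Λ : ℕ → α) {N : ℕ} (i : Fin N)
  (G : α → WOrd → Bool)

theorem forall_fin_iff_relCount :
    (∀ j : Fin N, G (Λ j) (ordOf i j) = true) ↔
      ∀ w β, 0 < relCount Λ N i w β → G β w = true := by
  simp only [relCount_pos_iff, Fin.forall_iff, ordOf_eq_ordNat]
  constructor
  · rintro h w β ⟨j, hj, rfl, rfl⟩
    exact h j hj
  · exact fun h j hj => h _ _ ⟨j, hj, rfl, rfl⟩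

theorem exists_fin_iff_relCount :
    (∃ j : Fin N, G (Λ j) (ordOf i j) = true) ↔
      ∃ w β, 0 < relCount Λ N i w β ∧ G β w = true := by
  simp only [relCount_pos_iff, Fin.exists_iff, ordOf_eq_ordNat]
  constructor
  · rintro ⟨j, hj, hG⟩
    exact ⟨_, _, ⟨j, hj, rfl, rfl⟩, hG⟩
  · rintro ⟨w, β, ⟨j, hj, rfl, rfl⟩, hG⟩
    exact ⟨j, hj, hG⟩

theorem card_filter_fin_eq_sum_relCount [Fintype α] :
    #{j : Fin N | G (Λ j) (ordOf i j) = true} =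
      ∑ w, ∑ β, if G β w = true then relCount Λ N i w β else 0 := by
  have hfin : #{j : Fin N | G (Λ j) (ordOf i j) = true} =
      #{j ∈ range N | G (Λ j) (ordNat i j) = true} := by
    simp only [card_filter, ordOf_eq_ordNat]
    exact Fin.sum_univ_eq_sum_range (fun j => if G (Λ j) (ordNat i j) = true then 1 else 0) N
  rw [hfin, card_eq_sum_card_fiberwise (f := fun j => (ordNat i j, Λ j)) (t := univ)
    fun _ _ => mem_univ _, Fintype.sum_prod_type]
  refine sum_congr rfl fun w _ => sum_congr rfl fun β _ => ?_
  rw [filter_filter, relCount]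
  split_ifs with hG
  · congr 1
    refine filter_congr fun j _ => ?_
    constructor
    · rintro ⟨-, h⟩
      simpa [Prod.ext_iff] using h
    · rintro ⟨rfl, rfl⟩
      exact ⟨hG, rfl⟩
  · refine card_eq_zero.mpr (filter_false_of_mem fun j _ ⟨hj, h⟩ => hG ?_)
    obtain ⟨rfl, rfl⟩ := Prod.ext_iff.mp h
    exact hj

end Positions

section Formula

variable {τ : Type} [Fintype τ] [DecidableEq τ] (φ : NF τ)

def NF.Holds (a : τ → Bool) (f : WOrd → (τ → Bool) → ℕ) : Prop :=
  (∀ w β, 0 < f w β → φ.chi a β w = true) ∧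
  (∀ c, ∃ w β, 0 < f w β ∧ φ.chis c a β w = true) ∧
  ∀ c, φ.bow c ((∑ w, ∑ β, if φ.psi c a β w = true then f w β else 0) % φ.l c)

theorem wsat_iff_forall_holds (Λ : ℕ → τ → Bool) (N : ℕ) :
    WSat φ N (fun i => Λ i) ↔ ∀ i : Fin N, φ.Holds (Λ i) (relCount Λ N i) := by
  simp only [WSat, NF.Holds, forall_fin_iff_relCount Λ _ (φ.chi _),
    exists_fin_iff_relCount Λ _ (φ.chis _ _), card_filter_fin_eq_sum_relCount Λ _ (φ.psi _ _)]
  simp only [forall_and]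
  rw [forall_comm (α := Fin φ.n), forall_comm (α := Fin φ.m)]

variable {φ} in
theorem NF.Holds.of_countEquiv {a : τ → Bool} {f g : WOrd → (τ → Bool) → ℕ}
    (hfg : ∀ w β, CountEquiv φ.l (f w β) (g w β)) (h : φ.Holds a f) : φ.Holds a g := by
  refine ⟨fun w β hg => h.1 w β ((hfg w β).1.mpr hg), fun c => ?_, fun c => ?_⟩
  · obtain ⟨w, β, hf, hc⟩ := h.2.1 c
    exact ⟨w, β, (hfg w β).1.mp hf, hc⟩
  · have hsum : (∑ w, ∑ β, if φ.psi c a β w = true then f w β else 0) ≡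
        (∑ w, ∑ β, if φ.psi c a β w = true then g w β else 0) [MOD φ.l c] := by
      gcongr with w _ β _
      split_ifs
      exacts [(hfg w β).2 c, rfl]
    rw [← hsum]
    exact h.2.2 c

theorem wsat_of_forall_exists_countEquiv {Λ Λ' : ℕ → τ → Bool} {M M' : ℕ}
    (h : ∀ x < M', ∃ y < M, ∀ w β,
      CountEquiv φ.l (relCount Λ M y w β) (relCount Λ' M' x w β))
    (hW : WSat φ M fun i => Λ i) : WSat φ M' fun i => Λ' i := by
  rw [wsat_iff_forall_holds] at hW ⊢
  intro x
  obtain ⟨y, hy, hxy⟩ := h x x.isLt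
  have hlab : Λ' x = Λ y := (relCount_self_pos_iff Λ' _ x.isLt).mp
    ((hxy .eq (Λ y)).1.mp ((relCount_self_pos_iff Λ _ hy).mpr rfl))
  exact hlab ▸ (hW ⟨y, hy⟩).of_countEquiv hxy

end Formula

section SmallModel

variable {τ : Type} [Fintype τ] [DecidableEq τ] (φ : NF τ)

abbrev NF.FullType : Type :=
  WOrd → (τ → Bool) → Bool × ((c : Fin φ.m) → Fin (φ.l c))

def fullType (Λ : ℕ → τ → Bool) (M i : ℕ) : φ.FullType := fun w β =>
  (decide (0 < relCount Λ M i w β),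
    fun c => ⟨relCount Λ M i w β % φ.l c, Nat.mod_lt _ (φ.lpos c)⟩)

theorem card_fullType : Fintype.card φ.FullType = fsize φ := by
  simp only [NF.FullType, Fintype.card_fun, Fintype.card_prod, Fintype.card_bool,
    Fintype.card_pi, Fintype.card_fin, show Fintype.card WOrd = 5 from rfl]
  rw [fsize, ← pow_mul]
  ring

omit [DecidableEq τ] in
variable {φ} in
theorem countEquiv_of_fullType_eq {Λ : ℕ → τ → Bool} {M i j : ℕ}
    (h : fullType φ Λ M i = fullType φ Λ M j) (w : WOrd) (β : τ → Bool) :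
    CountEquiv φ.l (relCount Λ M i w β) (relCount Λ M j w β) := by
  have hwβ := congrFun (congrFun h w) β
  simp only [fullType, Prod.mk.injEq, decide_eq_decide, funext_iff, Fin.ext_iff] at hwβ
  exact hwβ

theorem exists_lt_fullType_eq (Λ : ℕ → τ → Bool) {M : ℕ} (hM : fsize φ < M) :
    ∃ P Q, P < Q ∧ Q < M ∧ fullType φ Λ M P = fullType φ Λ M Q := by
  obtain ⟨p, q, hpq, he⟩ :=
    Fintype.exists_ne_map_eq_of_card_lt (fun i : Fin M => fullType φ Λ M i)
    (by rwa [card_fullType, Fintype.card_fin])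
  rcases lt_or_gt_of_ne (Fin.val_ne_of_ne hpq) with h | h
  exacts [⟨p, q, h, q.isLt, he⟩, ⟨q, p, h, p.isLt, he.symm⟩]

theorem exists_shorter_model {Λ : ℕ → τ → Bool} {M : ℕ} (hM : fsize φ < M)
    (hW : WSat φ M fun i => Λ i) :
    ∃ M' < M, 0 < M' ∧ ∃ Λ' : ℕ → τ → Bool, WSat φ M' fun i => Λ' i := by
  obtain ⟨P, Q, hPQ, hQM, hPQ_type⟩ := exists_lt_fullType_eq φ Λ hM
  obtain ⟨s, rfl⟩ := Nat.exists_eq_add_of_le hPQ.le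
  exact ⟨M - s, by omega, by omega, deleteIco Λ P s,
    wsat_of_forall_exists_countEquiv φ (fun x hx =>
      exists_relCount_countEquiv_deleteIco hQM (countEquiv_of_fullType_eq hPQ_type) hx) hW⟩

end SmallModel

/-- **Small model property over words.** Every normal-form FO²MOD[≤,succ]
formula satisfiable over finite words has a model of size at most `f(φ)`. -/
theorem stmt_4 {τ : Type} [Fintype τ] [DecidableEq τ] (φ : NF τ)
    (hsat : ∃ (N : ℕ) (lab : Fin N → τ → Bool), 0 < N ∧ WSat φ N lab) :
    ∃ (N : ℕ) (lab : Fin N → τ → Bool), 0 < N ∧ N ≤ fsize φ ∧ WSat φ N lab := by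
  obtain ⟨N, lab, hN, hW⟩ := hsat
  obtain ⟨Λ, rfl⟩ : ∃ Λ : ℕ → τ → Bool, (fun i : Fin N => Λ i) = lab :=
    ⟨fun a => if h : a < N then lab ⟨a, h⟩ else lab ⟨0, hN⟩,
      funext fun i => dif_pos i.isLt⟩
  induction N using Nat.strong_induction_on generalizing Λ with
  | _ N ih =>
    by_cases hsmall : N ≤ fsize φ
    · exact ⟨N, _, hN, hsmall, hW⟩
    · obtain ⟨M, hMN, hM, Λ', hW'⟩ := exists_shorter_model φ (not_le.mp hsmall) hW
      exact ih M hMN hM Λ' hW'
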